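/- arXiv:2306.08914 — 7 statements merged into one kernel-verified Lean document; each statement's English description precedes it below -/
import Mathlib

section
/- Let x : [0, t_f] → 𝕏 be a continuously differentiable solution of the RIPHS state equation ẋ(t) = (J₀(x(t)) + Σ_{k=1}^N γ_k(x(t)) {S,H}_{J_k}(x(t)) J_k) H_x(x(t)) + g(x(t)) u(t) for a continuous control u : [0,t_f] → ℝ^m. Then the entropy balance holds: for every t ∈ [0, t_f], d/dt S(x(t)) = Σ_{k=1}^N γ_k(x(t)) · ({S,H}_{J_k}(x(t)))² + y_S(t)ᵀ u(t), where y_S(t) = g(x(t))ᵀ S_x(x(t)). In particular, if g ≡ 0 then S is nondecreasing along solutions. -/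
open Set Matrix

/-- Matrix–vector multiplication on Euclidean space. -/
noncomputable def mv {a b : ℕ} (A : Matrix (Fin a) (Fin b) ℝ)
    (x : EuclideanSpace ℝ (Fin b)) : EuclideanSpace ℝ (Fin a) :=
  Matrix.toEuclideanLin A x

/-- The Poisson bracket `{S,H}_J(x) = S_x(x)ᵀ J H_x(x)`, evaluated at given gradients. -/
noncomputable def bracket {n : ℕ} (J : Matrix (Fin n) (Fin n) ℝ)
    (Sx Hx : EuclideanSpace ℝ (Fin n)) : ℝ :=
  inner ℝ Sx (mv J Hx)
/-!
Along a solution, the chain rule gives `d/dt S(x) = ⟪S_x, ẋ⟫`. Insert the state equation: the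
`J₀`-term contributes `{S,H}_{J₀} = -{H,S}_{J₀} = 0` because `J₀` is skew and `S` is a Casimir,
each irreversible term `γ_k {S,H}_{J_k} J_k H_x` contributes `γ_k {S,H}_{J_k}²`, and the port term
`⟪S_x, g u⟫` is `⟪gᵀ S_x, u⟫`. With `g = 0` the rate is a sum of nonnegative terms.
-/

theorem HasGradientAt.comp_hasDerivWithinAt {F : Type*} [NormedAddCommGroup F]
    [InnerProductSpace ℝ F] [CompleteSpace F] {f : F → ℝ} {f' : F} {γ : ℝ → F} {γ' : F}
    {s : Set ℝ} {t : ℝ} (hf : HasGradientAt f f' (γ t)) (hγ : HasDerivWithinAt γ γ' s t) :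
    HasDerivWithinAt (f ∘ γ) (inner ℝ f' γ') s t :=
  hf.hasFDerivAt.comp_hasDerivWithinAt t hγ

section MatrixVector

variable {a b : ℕ}

lemma mv_add (A B : Matrix (Fin a) (Fin b) ℝ) (v : EuclideanSpace ℝ (Fin b)) :
    mv (A + B) v = mv A v + mv B v := by
  simp [mv]

lemma mv_smul (c : ℝ) (A : Matrix (Fin a) (Fin b) ℝ) (v : EuclideanSpace ℝ (Fin b)) :
    mv (c • A) v = c • mv A v := by
  simp [mv]

lemma mv_neg (A : Matrix (Fin a) (Fin b) ℝ) (v : EuclideanSpace ℝ (Fin b)) :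
    mv (-A) v = -mv A v := by
  simp [mv]

lemma mv_sum {ι : Type*} (s : Finset ι) (A : ι → Matrix (Fin a) (Fin b) ℝ)
    (v : EuclideanSpace ℝ (Fin b)) :
    mv (∑ k ∈ s, A k) v = ∑ k ∈ s, mv (A k) v := by
  simp [mv, LinearMap.sum_apply]

lemma mv_zero_left (v : EuclideanSpace ℝ (Fin b)) : mv (0 : Matrix (Fin a) (Fin b) ℝ) v = 0 := by
  simp [mv]

lemma inner_mv_left (A : Matrix (Fin a) (Fin b) ℝ) (v : EuclideanSpace ℝ (Fin b))
    (w : EuclideanSpace ℝ (Fin a)) :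
    inner ℝ (mv A v) w = inner ℝ v (mv Aᵀ w) := by
  rw [mv, mv, ← conjTranspose_eq_transpose_of_trivial, toEuclideanLin_conjTranspose_eq_adjoint,
    LinearMap.adjoint_inner_right]

end MatrixVector

section Bracket

variable {n : ℕ} {J : Matrix (Fin n) (Fin n) ℝ}

lemma bracket_swap_of_transpose_eq_neg (hJ : Jᵀ = -J) (v w : EuclideanSpace ℝ (Fin n)) :
    bracket J v w = -bracket J w v := by
  rw [bracket, bracket, real_inner_comm, inner_mv_left, hJ, mv_neg, inner_neg_right]

lemma bracket_eq_zero_of_mv_eq_zero (hJ : Jᵀ = -J) {s : EuclideanSpace ℝ (Fin n)}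
    (hs : mv J s = 0) (h : EuclideanSpace ℝ (Fin n)) : bracket J s h = 0 := by
  rw [bracket_swap_of_transpose_eq_neg hJ, bracket, hs, inner_zero_right, neg_zero]

end Bracket

lemma inner_riphs_field {n N m : ℕ} {J0 : Matrix (Fin n) (Fin n) ℝ}
    (hJ0 : J0ᵀ = -J0) (J : Fin N → Matrix (Fin n) (Fin n) ℝ) (γ : Fin N → ℝ)
    (G : Matrix (Fin n) (Fin m) ℝ) {s : EuclideanSpace ℝ (Fin n)} (hs : mv J0 s = 0)
    (h : EuclideanSpace ℝ (Fin n)) (u : EuclideanSpace ℝ (Fin m)) :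
    inner ℝ s (mv (J0 + ∑ k, (γ k * bracket (J k) s h) • J k) h + mv G u) =
      ∑ k, γ k * bracket (J k) s h ^ 2 + inner ℝ (mv Gᵀ s) u := by
  have hreversible : inner ℝ s (mv J0 h) = 0 := bracket_eq_zero_of_mv_eq_zero hJ0 hs h
  have hport : inner ℝ (mv Gᵀ s) u = inner ℝ s (mv G u) := by
    rw [inner_mv_left, transpose_transpose]
  simp only [mv_add, mv_sum, mv_smul, inner_add_right, inner_sum, inner_smul_right, hreversible,
    hport, zero_add]
  congr 1
  refine Finset.sum_congr rfl fun k _ => ?_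
  rw [← bracket]
  ring

theorem entropy_balance_RIPHS_general
    (n N m : ℕ)
    (X : Set (EuclideanSpace ℝ (Fin n)))
    -- Poisson structure matrix field J₀ : continuous, skew-symmetric
    (J0 : EuclideanSpace ℝ (Fin n) → Matrix (Fin n) (Fin n) ℝ)
    (hJ0skew : ∀ p ∈ X, (J0 p)ᵀ = -(J0 p))
    -- Hamiltonian H, differentiable with continuous gradient Hx
    (Hx : EuclideanSpace ℝ (Fin n) → EuclideanSpace ℝ (Fin n))
    -- entropy S, differentiable with continuous gradient Sx, Casimir of J₀
    (S : EuclideanSpace ℝ (Fin n) → ℝ)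
    (Sx : EuclideanSpace ℝ (Fin n) → EuclideanSpace ℝ (Fin n))
    (hS : ∀ p ∈ X, HasGradientAt S (Sx p) p)
    (hCasimir : ∀ p ∈ X, mv (J0 p) (Sx p) = 0)
    -- constant skew-symmetric structure matrices J₁,…,J_N
    (J : Fin N → Matrix (Fin n) (Fin n) ℝ)
    -- positive continuous functions γ_k
    (γ : Fin N → EuclideanSpace ℝ (Fin n) → ℝ)
    (hγpos : ∀ k, ∀ p ∈ X, 0 < γ k p)
    -- continuous input matrix g
    (g : EuclideanSpace ℝ (Fin n) → Matrix (Fin n) (Fin m) ℝ)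
    -- a continuously differentiable solution x on [0, t_f] with continuous control u
    (tf : ℝ)
    (x : ℝ → EuclideanSpace ℝ (Fin n))
    (u : ℝ → EuclideanSpace ℝ (Fin m))
    (hxmem : ∀ t ∈ Icc 0 tf, x t ∈ X)
    (x' : ℝ → EuclideanSpace ℝ (Fin n))
    (hxdiff : ∀ t ∈ Icc 0 tf, HasDerivWithinAt x (x' t) (Icc 0 tf) t)
    -- the RIPHS state equation
    (hdyn : ∀ t ∈ Icc 0 tf,
      x' t =
        mv (J0 (x t) + ∑ k, (γ k (x t) * bracket (J k) (Sx (x t)) (Hx (x t))) • J k)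
           (Hx (x t))
        + mv (g (x t)) (u t)) :
    -- entropy balance
    (∀ t ∈ Icc 0 tf,
      HasDerivWithinAt (fun s => S (x s))
        ((∑ k, γ k (x t) * (bracket (J k) (Sx (x t)) (Hx (x t)))^2)
          + (inner ℝ (mv (g (x t))ᵀ (Sx (x t))) (u t) : ℝ)) (Icc 0 tf) t)
    ∧ ((∀ p, g p = 0) → MonotoneOn (fun t => S (x t)) (Icc 0 tf)) := by
  have balance : ∀ t ∈ Icc 0 tf,
      HasDerivWithinAt (fun s => S (x s))
        ((∑ k, γ k (x t) * (bracket (J k) (Sx (x t)) (Hx (x t)))^2)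
          + (inner ℝ (mv (g (x t))ᵀ (Sx (x t))) (u t) : ℝ)) (Icc 0 tf) t := by
    intro t ht
    have hx := hxmem t ht
    rw [← inner_riphs_field (hJ0skew _ hx) J _ _ (hCasimir _ hx), ← hdyn t ht]
    exact (hS _ hx).comp_hasDerivWithinAt (hxdiff t ht)
  refine ⟨balance, fun hg => ?_⟩
  refine monotoneOn_of_hasDerivWithinAt_nonneg (convex_Icc 0 tf)
    (fun t ht => (balance t ht).continuousWithinAt)
    (fun t ht => (balance t (interior_subset ht)).mono interior_subset) fun t ht => ?_
  simp only [hg, transpose_zero, mv_zero_left, inner_zero_left, add_zero]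
  exact Finset.sum_nonneg fun k _ =>
    mul_nonneg (hγpos k _ (hxmem t (interior_subset ht))).le (sq_nonneg _)

/-- Entropy balance for solutions of a reversible-irreversible port-Hamiltonian system:
`d/dt S(x(t)) = Σ_k γ_k(x(t)) ({S,H}_{J_k}(x(t)))² + y_S(t)ᵀ u(t)` with
`y_S(t) = g(x(t))ᵀ S_x(x(t))`; in particular, if `g ≡ 0` then `S` is nondecreasing
along the solution. -/
theorem entropy_balance_RIPHS
    (n N m : ℕ)
    (X : Set (EuclideanSpace ℝ (Fin n))) (hXopen : IsOpen X)
    -- Poisson structure matrix field J₀ : continuous, skew-symmetric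
    (J0 : EuclideanSpace ℝ (Fin n) → Matrix (Fin n) (Fin n) ℝ)
    (hJ0cont : ContinuousOn J0 X)
    (hJ0skew : ∀ p ∈ X, (J0 p)ᵀ = -(J0 p))
    -- Hamiltonian H, differentiable with continuous gradient Hx
    (H : EuclideanSpace ℝ (Fin n) → ℝ)
    (Hx : EuclideanSpace ℝ (Fin n) → EuclideanSpace ℝ (Fin n))
    (hH : ∀ p ∈ X, HasGradientAt H (Hx p) p)
    (hHxcont : ContinuousOn Hx X)
    -- entropy S, differentiable with continuous gradient Sx, Casimir of J₀
    (S : EuclideanSpace ℝ (Fin n) → ℝ)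
    (Sx : EuclideanSpace ℝ (Fin n) → EuclideanSpace ℝ (Fin n))
    (hS : ∀ p ∈ X, HasGradientAt S (Sx p) p)
    (hSxcont : ContinuousOn Sx X)
    (hCasimir : ∀ p ∈ X, mv (J0 p) (Sx p) = 0)
    -- constant skew-symmetric structure matrices J₁,…,J_N
    (J : Fin N → Matrix (Fin n) (Fin n) ℝ)
    (hJskew : ∀ k, (J k)ᵀ = -(J k))
    -- positive continuous functions γ_k
    (γ : Fin N → EuclideanSpace ℝ (Fin n) → ℝ)
    (hγpos : ∀ k, ∀ p ∈ X, 0 < γ k p)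
    (hγcont : ∀ k, ContinuousOn (γ k) X)
    -- continuous input matrix g
    (g : EuclideanSpace ℝ (Fin n) → Matrix (Fin n) (Fin m) ℝ)
    (hgcont : ContinuousOn g X)
    -- a continuously differentiable solution x on [0, t_f] with continuous control u
    (tf : ℝ) (htf : 0 ≤ tf)
    (x : ℝ → EuclideanSpace ℝ (Fin n))
    (u : ℝ → EuclideanSpace ℝ (Fin m))
    (hu : ContinuousOn u (Icc 0 tf))
    (hxmem : ∀ t ∈ Icc 0 tf, x t ∈ X)
    (x' : ℝ → EuclideanSpace ℝ (Fin n))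
    (hx'cont : ContinuousOn x' (Icc 0 tf))
    (hxdiff : ∀ t ∈ Icc 0 tf, HasDerivWithinAt x (x' t) (Icc 0 tf) t)
    -- the RIPHS state equation
    (hdyn : ∀ t ∈ Icc 0 tf,
      x' t =
        mv (J0 (x t) + ∑ k, (γ k (x t) * bracket (J k) (Sx (x t)) (Hx (x t))) • J k)
           (Hx (x t))
        + mv (g (x t)) (u t)) :
    -- entropy balance
    (∀ t ∈ Icc 0 tf,
      HasDerivWithinAt (fun s => S (x s))
        ((∑ k, γ k (x t) * (bracket (J k) (Sx (x t)) (Hx (x t)))^2)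
          + (inner ℝ (mv (g (x t))ᵀ (Sx (x t))) (u t) : ℝ)) (Icc 0 tf) t)
    ∧ ((∀ p, g p = 0) → MonotoneOn (fun t => S (x t)) (Icc 0 tf)) :=
  entropy_balance_RIPHS_general n N m X J0 hJ0skew Hx S Sx hS hCasimir J γ hγpos g tf x u hxmem x'
    hxdiff hdyn
end

section
/- Assume H ∈ C²(𝕏, ℝ), S(x) = eᵀx for some e ∈ ℝⁿ, and for all x ∈ 𝕏 the (n+1)×n matrix obtained by stacking the Hessian H_{xx}(x) on top of the row vector H_x(x)ᵀ has rank n. Set v_k = J_k e for k = 1,…,N, assume r := rank[v₁ … v_N] ≥ 1 and (after reordering) that v₁,…,v_r are linearly independent, and define f : 𝕏 → ℝʳ by f(x) = [v₁ … v_r]ᵀ H_x(x). Then 𝒯 = f⁻¹({0}), and for every x₀ ∈ 𝕏 with f(x₀) = 0 the derivative Df(x₀) = [v₁ … v_r]ᵀ H_{xx}(x₀) : ℝⁿ → ℝʳ is surjective, i.e., 0 is a regular value of f. -/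
open Set Matrix

/-! At every point `{S,H}_{J_k} = -v_kᵀ H_x`, and as `rank[v₁ … v_N] = r` every `v_k` is a
combination of `v₁, …, v_r`; hence `𝒯 = f⁻¹{0}`. At a zero `x₀` of `f`, the Hessian
`A = H_{xx}(x₀)` is symmetric (Schwarz). If `cᵀ Vᵀ A = 0` with `V = [v₁ … v_r]`, then `u = V c`
satisfies `A u = 0` and `H_x(x₀)ᵀ u = cᵀ f(x₀) = 0`, so `u = 0` by the rank condition on
`[H_{xx}; H_xᵀ]`, and `c = 0` by independence of the `v_k`. Thus `Vᵀ A` has independent rows. -/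

open Filter Topology Module

theorem isSymmetric_of_hasGradientAt_of_hasFDerivAt {E : Type*} [NormedAddCommGroup E]
    [InnerProductSpace ℝ E] [CompleteSpace E] {H : E → ℝ} {g : E → E} {A : E →L[ℝ] E} {x : E}
    (hH : ∀ᶠ y in 𝓝 x, HasGradientAt H (g y) y) (hg : HasFDerivAt g A x) :
    (A : E →ₗ[ℝ] E).IsSymmetric := by
  have hH' : ∀ᶠ y in 𝓝 x, HasFDerivAt H (innerSL ℝ (g y)) y :=
    hH.mono fun y hy => hasGradientAt_iff_hasFDerivAt.mp hy
  have hg' : HasFDerivAt (fun y => innerSL ℝ (g y)) ((innerSL ℝ).comp A) x :=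
    (innerSL ℝ).hasFDerivAt.comp x hg
  intro u w
  simpa [real_inner_comm] using second_derivative_symmetric_of_eventually hH' hg' u w

namespace Matrix

theorem isSymm_of_hasGradientAt_of_hasFDerivAt {ι : Type*} [Fintype ι] [DecidableEq ι]
    {H : EuclideanSpace ℝ ι → ℝ} {g : EuclideanSpace ℝ ι → EuclideanSpace ℝ ι}
    {A : Matrix ι ι ℝ} {x : EuclideanSpace ℝ ι}
    (hH : ∀ᶠ y in 𝓝 x, HasGradientAt H (g y) y)
    (hg : HasFDerivAt g (LinearMap.toContinuousLinearMap A.toEuclideanLin) x) : A.IsSymm :=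
  isSymmetric_toEuclideanLin_iff.mp (isSymmetric_of_hasGradientAt_of_hasFDerivAt hH hg)

variable {K : Type*} [Field K] {m n : Type*} [Fintype n]

theorem mulVec_injective_of_rank_eq_card {M : Matrix m n K} (h : M.rank = Fintype.card n) :
    Function.Injective M.mulVec := by
  rw [mulVec_injective_iff, linearIndependent_iff_card_eq_finrank_span, Set.finrank,
    ← rank_eq_finrank_span_cols, h]

theorem mulVec_surjective_of_linearIndependent_row [Fintype m] {M : Matrix m n K}
    (h : LinearIndependent K M.row) : Function.Surjective M.mulVec := by
  rw [← coe_mulVecLin, ← LinearMap.range_eq_top]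
  apply Submodule.eq_top_of_finrank_eq
  rw [← rank, h.rank_matrix, finrank_fintype_fun_eq_card]

theorem eq_zero_of_rank_snoc_eq_card {k : ℕ} {A : Matrix (Fin k) n K} {g : n → K}
    (h : (of (Fin.snoc (fun i => A i) g) : Matrix (Fin (k + 1)) n K).rank = Fintype.card n)
    {u : n → K} (hAu : A *ᵥ u = 0) (hgu : g ⬝ᵥ u = 0) : u = 0 := by
  refine mulVec_injective_of_rank_eq_card h ?_
  rw [mulVec_zero]
  funext i
  induction i using Fin.lastCases with
  | last => simpa [mulVec, dotProduct_comm] using hgu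
  | cast i => simpa [mulVec] using congrFun hAu i

theorem linearIndependent_row_mul_of_isSymm [Fintype m] {A : Matrix n n K} (hA : A.IsSymm)
    {g : n → K} {V : Matrix m n K} (hV : LinearIndependent K V.row) (hVg : V *ᵥ g = 0)
    (hker : ∀ u, A *ᵥ u = 0 → g ⬝ᵥ u = 0 → u = 0) : LinearIndependent K (V * A).row := by
  rw [← vecMul_injective_iff] at hV ⊢
  rw [← coe_vecMulLinear, injective_iff_map_eq_zero] at hV ⊢
  intro c hc
  have hAu : A *ᵥ (c ᵥ* V) = 0 := by
    rw [← vecMul_transpose, hA.eq, vecMul_vecMul]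
    exact hc
  have hgu : g ⬝ᵥ (c ᵥ* V) = 0 := by
    rw [dotProduct_comm, ← dotProduct_mulVec, hVg, dotProduct_zero]
  exact hV c (hker _ hAu hgu)

end Matrix

theorem Submodule.span_range_comp_eq_of_finrank_eq {K M ι κ : Type*} [Field K] [AddCommGroup M]
    [Module K M] [FiniteDimensional K M] [Fintype κ] {v : ι → M} {f : κ → ι}
    (hli : LinearIndependent K (v ∘ f)) (h : finrank K (span K (Set.range v)) = Fintype.card κ) :
    span K (Set.range (v ∘ f)) = span K (Set.range v) :=
  eq_of_le_of_finrank_eq (span_mono (Set.range_comp_subset_range f v))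
    (by rw [finrank_span_eq_card hli, h])

theorem inner_mv_eq_neg_dotProduct {n : ℕ} {J : Matrix (Fin n) (Fin n) ℝ} (hJ : Jᵀ = -J)
    (e x : EuclideanSpace ℝ (Fin n)) :
    inner ℝ e (mv J x) = -((J *ᵥ fun i => e i) ⬝ᵥ fun j => x j) := calc
  inner ℝ e (mv J x) = e ⬝ᵥ J *ᵥ x := by
    rw [EuclideanSpace.inner_eq_star_dotProduct, star_trivial]
    exact dotProduct_comm _ _
  _ = -((J *ᵥ e) ⬝ᵥ x) := by
    rw [dotProduct_mulVec, ← mulVec_transpose, hJ, neg_mulVec, neg_dotProduct]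

theorem equilibria_regular_value_general
    (n N : ℕ)
    (X : Set (EuclideanSpace ℝ (Fin n))) (hXopen : IsOpen X)
    -- H is C² on X, with gradient Hx and Hessian Hxx
    (H : EuclideanSpace ℝ (Fin n) → ℝ)
    (Hx : EuclideanSpace ℝ (Fin n) → EuclideanSpace ℝ (Fin n))
    (Hxx : EuclideanSpace ℝ (Fin n) → Matrix (Fin n) (Fin n) ℝ)
    (hH : ∀ p ∈ X, HasGradientAt H (Hx p) p)
    (hHx : ∀ p ∈ X,
      HasFDerivAt Hx (LinearMap.toContinuousLinearMap (Matrix.toEuclideanLin (Hxx p))) p)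
    -- the entropy is S(x) = eᵀ x
    (e : EuclideanSpace ℝ (Fin n))
    -- skew-symmetric structure matrices
    (J : Fin N → Matrix (Fin n) (Fin n) ℝ)
    (hJskew : ∀ k, (J k)ᵀ = -(J k))
    -- rank condition: the (n+1)×n matrix [H_{xx}(x); H_x(x)ᵀ] has rank n on X
    (hrank : ∀ p ∈ X,
      (Matrix.of (Fin.snoc (fun i : Fin n => Hxx p i) (fun j : Fin n => Hx p j)) :
        Matrix (Fin (n+1)) (Fin n) ℝ).rank = n)
    -- v_k = J_k e, r = rank[v₁ … v_N] ≥ 1, v₁,…,v_r linearly independent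
    (v : Fin N → (Fin n → ℝ))
    (hv : ∀ k, v k = (J k).mulVec (fun i => e i))
    (r : ℕ) (hrN : r ≤ N)
    (hrankv : (Matrix.of (fun (i : Fin n) (k : Fin N) => v k i) :
        Matrix (Fin n) (Fin N) ℝ).rank = r)
    (hli : LinearIndependent ℝ (fun k : Fin r => v (Fin.castLE hrN k))) :
    -- 𝒯 = f⁻¹({0}) for f(x) = [v₁ … v_r]ᵀ H_x(x)
    ({p ∈ X | ∀ k, (inner ℝ e (mv (J k) (Hx p)) : ℝ) = 0}
      = {p ∈ X | (fun k : Fin r => v (Fin.castLE hrN k) ⬝ᵥ (fun j => Hx p j)) = 0})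
    -- 0 is a regular value of f: Df(x₀) = [v₁ … v_r]ᵀ H_{xx}(x₀) is surjective at zeros of f
    ∧ (∀ x₀ ∈ X,
        (fun k : Fin r => v (Fin.castLE hrN k) ⬝ᵥ (fun j => Hx x₀ j)) = 0 →
        Function.Surjective
          (fun (w : Fin n → ℝ) (k : Fin r) =>
            v (Fin.castLE hrN k) ⬝ᵥ (Hxx x₀).mulVec w)) := by
  set V : Fin r → (Fin n → ℝ) := fun k => v (Fin.castLE hrN k)
  have hbracket (k : Fin N) (p : EuclideanSpace ℝ (Fin n)) :
      inner ℝ e (mv (J k) (Hx p)) = -(v k ⬝ᵥ fun j => Hx p j) := by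
    rw [inner_mv_eq_neg_dotProduct (hJskew k), hv k]
  have hspan : Submodule.span ℝ (range V) = Submodule.span ℝ (range v) :=
    Submodule.span_range_comp_eq_of_finrank_eq hli
      (by rw [← hrankv, rank_eq_finrank_span_cols, Fintype.card_fin]; rfl)
  refine ⟨?_, fun x₀ hx₀ hf₀ => ?_⟩
  · ext p
    simp only [mem_sep_iff, hbracket, neg_eq_zero, funext_iff, Pi.zero_apply]
    refine and_congr_right fun _ => ⟨fun h k => h _, fun h k => ?_⟩
    have hle : Submodule.span ℝ (range v) ≤
        LinearMap.ker ((dotProductBilin ℝ ℝ).flip fun j => Hx p j) := by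
      rw [← hspan, Submodule.span_le]
      rintro _ ⟨k, rfl⟩
      exact h k
    exact hle (Submodule.subset_span ⟨k, rfl⟩)
  · have hsymm : (Hxx x₀).IsSymm := isSymm_of_hasGradientAt_of_hasFDerivAt
      (eventually_of_mem (hXopen.mem_nhds hx₀) hH) (hHx x₀ hx₀)
    have hker (u : Fin n → ℝ) : Hxx x₀ *ᵥ u = 0 → (fun j => Hx x₀ j) ⬝ᵥ u = 0 → u = 0 :=
      eq_zero_of_rank_snoc_eq_card ((hrank x₀ hx₀).trans (Fintype.card_fin n).symm)
    convert mulVec_surjective_of_linearIndependent_row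
      (linearIndependent_row_mul_of_isSymm hsymm hli hf₀ hker) using 1
    ext u : 1
    exact mulVec_mulVec u (of V) (Hxx x₀)

/-- Under the rank condition on the stacked matrix `[H_{xx}(x); H_x(x)ᵀ]`, with
`S(x) = eᵀx`, `v_k = J_k e`, `r = rank[v₁ … v_N] ≥ 1` and `v₁,…,v_r` linearly
independent, the set of thermodynamic equilibria equals `f⁻¹({0})` for
`f(x) = [v₁ … v_r]ᵀ H_x(x)`, and `0` is a regular value of `f`: at every zero `x₀`
of `f` in `𝕏`, the derivative `Df(x₀) = [v₁ … v_r]ᵀ H_{xx}(x₀)` is surjective. -/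
theorem equilibria_regular_value
    (n N : ℕ)
    (X : Set (EuclideanSpace ℝ (Fin n))) (hXopen : IsOpen X)
    -- H is C² on X, with gradient Hx and Hessian Hxx
    (H : EuclideanSpace ℝ (Fin n) → ℝ)
    (Hx : EuclideanSpace ℝ (Fin n) → EuclideanSpace ℝ (Fin n))
    (Hxx : EuclideanSpace ℝ (Fin n) → Matrix (Fin n) (Fin n) ℝ)
    (hH : ∀ p ∈ X, HasGradientAt H (Hx p) p)
    (hHx : ∀ p ∈ X,
      HasFDerivAt Hx (LinearMap.toContinuousLinearMap (Matrix.toEuclideanLin (Hxx p))) p)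
    (hHxxcont : ContinuousOn Hxx X)
    -- the entropy is S(x) = eᵀ x
    (e : EuclideanSpace ℝ (Fin n))
    -- skew-symmetric structure matrices
    (J : Fin N → Matrix (Fin n) (Fin n) ℝ)
    (hJskew : ∀ k, (J k)ᵀ = -(J k))
    -- rank condition: the (n+1)×n matrix [H_{xx}(x); H_x(x)ᵀ] has rank n on X
    (hrank : ∀ p ∈ X,
      (Matrix.of (Fin.snoc (fun i : Fin n => Hxx p i) (fun j : Fin n => Hx p j)) :
        Matrix (Fin (n+1)) (Fin n) ℝ).rank = n)
    -- v_k = J_k e, r = rank[v₁ … v_N] ≥ 1, v₁,…,v_r linearly independent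
    (v : Fin N → (Fin n → ℝ))
    (hv : ∀ k, v k = (J k).mulVec (fun i => e i))
    (r : ℕ) (hr1 : 1 ≤ r) (hrN : r ≤ N)
    (hrankv : (Matrix.of (fun (i : Fin n) (k : Fin N) => v k i) :
        Matrix (Fin n) (Fin N) ℝ).rank = r)
    (hli : LinearIndependent ℝ (fun k : Fin r => v (Fin.castLE hrN k))) :
    -- 𝒯 = f⁻¹({0}) for f(x) = [v₁ … v_r]ᵀ H_x(x)
    ({p ∈ X | ∀ k, (inner ℝ e (mv (J k) (Hx p)) : ℝ) = 0}
      = {p ∈ X | (fun k : Fin r => v (Fin.castLE hrN k) ⬝ᵥ (fun j => Hx p j)) = 0})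
    -- 0 is a regular value of f: Df(x₀) = [v₁ … v_r]ᵀ H_{xx}(x₀) is surjective at zeros of f
    ∧ (∀ x₀ ∈ X,
        (fun k : Fin r => v (Fin.castLE hrN k) ⬝ᵥ (fun j => Hx x₀ j)) = 0 →
        Function.Surjective
          (fun (w : Fin n → ℝ) (k : Fin r) =>
            v (Fin.castLE hrN k) ⬝ᵥ (Hxx x₀).mulVec w)) :=
  equilibria_regular_value_general n N X hXopen H Hx Hxx hH hHx e J hJskew hrank v hv r hrN hrankv
    hli
end

section
/- Let x : [0, t_f] → 𝕏 be a continuously differentiable solution of the RIPHS state equation ẋ = (J₀(x) + Σ_{k=1}^N γ_k(x) {S,H}_{J_k}(x) J_k) H_x(x) + g(x) u with continuous control u, and let V ∈ ℝ^{n×n} be invertible. Define z(t) = V x(t), H̃(z) = H(V⁻¹z), S̃(z) = S(V⁻¹z), J̃₀(z) = V J₀(V⁻¹z) Vᵀ, J̃_k = V J_k Vᵀ, γ̃_k(z) = γ_k(V⁻¹z), and g̃(z) = V g(V⁻¹z). Then the gradients satisfy H̃_z(z) = V⁻ᵀ H_x(V⁻¹z) and S̃_z(z) = V⁻ᵀ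 S_x(V⁻¹z), each J̃_k is skew-symmetric, S̃ is a Casimir of J̃₀ (i.e., J̃₀(z) S̃_z(z) = 0), and z solves the transformed RIPHS ż = (J̃₀(z) + Σ_{k=1}^N γ̃_k(z) {S̃,H̃}_{J̃_k}(z) J̃_k) H̃_z(z) + g̃(z) u. -/
/-!
Under `z = V x` gradients transform contravariantly, `∇(f ∘ V⁻¹) = V⁻ᵀ (∇f ∘ V⁻¹)`, while structure
matrices transform by congruence, `J ↦ V J Vᵀ`. The two effects cancel in `J̃ ∇̃f = V (J ∇f)`, so
Poisson brackets and Casimirs are preserved and the transformed vector field is `V` times the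
original one, which is exactly `ż = V ẋ`.
-/

open Set Matrix

namespace RIPHS

variable {a b c : ℕ}

lemma mv_mul (A : Matrix (Fin a) (Fin b) ℝ) (B : Matrix (Fin b) (Fin c) ℝ)
    (x : EuclideanSpace ℝ (Fin c)) : mv (A * B) x = mv A (mv B x) := by
  simp [mv]

lemma mv_one (x : EuclideanSpace ℝ (Fin a)) : mv 1 x = x := by
  simp [mv]

lemma mv_add (A : Matrix (Fin a) (Fin b) ℝ) (x y : EuclideanSpace ℝ (Fin b)) :
    mv A (x + y) = mv A x + mv A y :=
  map_add _ x y

lemma mv_zero (A : Matrix (Fin a) (Fin b) ℝ) : mv A 0 = 0 :=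
  map_zero _

lemma inner_mv_transpose (A : Matrix (Fin a) (Fin b) ℝ) (s : EuclideanSpace ℝ (Fin a))
    (v : EuclideanSpace ℝ (Fin b)) : inner ℝ (mv Aᵀ s) v = inner ℝ s (mv A v) := by
  rw [mv, ← conjTranspose_eq_transpose_of_trivial, toEuclideanLin_conjTranspose_eq_adjoint]
  exact LinearMap.adjoint_inner_left _ _ _

open InnerProductSpace in
theorem hasGradientAt_comp_mv {A : Matrix (Fin a) (Fin b) ℝ}
    {f : EuclideanSpace ℝ (Fin a) → ℝ} {f' : EuclideanSpace ℝ (Fin a)}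
    {z : EuclideanSpace ℝ (Fin b)} (hf : HasGradientAt f f' (mv A z)) :
    HasGradientAt (fun w => f (mv A w)) (mv Aᵀ f') z := by
  rw [hasGradientAt_iff_hasFDerivAt]
  have hdual : (toDual ℝ _ f').comp (toEuclideanLin A).toContinuousLinearMap
      = toDual ℝ _ (mv Aᵀ f') := by
    ext v
    exact (inner_mv_transpose A f' v).symm
  exact hdual ▸ hf.hasFDerivAt.comp z (toEuclideanLin A).toContinuousLinearMap.hasFDerivAt

theorem HasDerivWithinAt.mv (A : Matrix (Fin a) (Fin b) ℝ)
    {x : ℝ → EuclideanSpace ℝ (Fin b)} {x' : EuclideanSpace ℝ (Fin b)} {s : Set ℝ} {t : ℝ}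
    (hx : HasDerivWithinAt x x' s t) : HasDerivWithinAt (fun τ => mv A (x τ)) (mv A x') s t :=
  (toEuclideanLin A).toContinuousLinearMap.hasFDerivAt.comp_hasDerivWithinAt t hx

lemma transpose_mul_mul_transpose_of_skew (V : Matrix (Fin a) (Fin b) ℝ)
    {J : Matrix (Fin b) (Fin b) ℝ} (hJ : Jᵀ = -J) : (V * J * Vᵀ)ᵀ = -(V * J * Vᵀ) := by
  rw [transpose_mul, transpose_mul, transpose_transpose, hJ, Matrix.neg_mul, Matrix.mul_neg,
    Matrix.mul_assoc]

variable {n : ℕ} {V : Matrix (Fin n) (Fin n) ℝ}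

lemma mv_nonsing_inv_mv (hV : IsUnit V.det) (x : EuclideanSpace ℝ (Fin n)) :
    mv V⁻¹ (mv V x) = x := by
  rw [← mv_mul, nonsing_inv_mul V hV, mv_one]

lemma mv_congr_mv_transpose_inv (hV : IsUnit V.det) (A : Matrix (Fin n) (Fin n) ℝ)
    (w : EuclideanSpace ℝ (Fin n)) : mv (V * A * Vᵀ) (mv V⁻¹ᵀ w) = mv V (mv A w) := by
  rw [mv_mul, mv_mul, ← mv_mul Vᵀ, ← transpose_mul, nonsing_inv_mul V hV, transpose_one, mv_one]

lemma bracket_congr (hV : IsUnit V.det) (J : Matrix (Fin n) (Fin n) ℝ)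
    (s h : EuclideanSpace ℝ (Fin n)) :
    bracket (V * J * Vᵀ) (mv V⁻¹ᵀ s) (mv V⁻¹ᵀ h) = bracket J s h := by
  rw [bracket, mv_congr_mv_transpose_inv hV, inner_mv_transpose, mv_nonsing_inv_mv hV, bracket]

/-- The right-hand side of the RIPHS state equation, with `s = S_x` and `h = H_x`. -/
noncomputable def vectorField {N m : ℕ} (J0 : Matrix (Fin n) (Fin n) ℝ)
    (J : Fin N → Matrix (Fin n) (Fin n) ℝ) (γ : Fin N → ℝ) (s h : EuclideanSpace ℝ (Fin n))
    (G : Matrix (Fin n) (Fin m) ℝ) (u : EuclideanSpace ℝ (Fin m)) : EuclideanSpace ℝ (Fin n) :=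
  mv (J0 + ∑ k, (γ k * bracket (J k) s h) • J k) h + mv G u

lemma vectorField_congr {N m : ℕ} (hV : IsUnit V.det) (J0 : Matrix (Fin n) (Fin n) ℝ)
    (J : Fin N → Matrix (Fin n) (Fin n) ℝ) (γ : Fin N → ℝ) (s h : EuclideanSpace ℝ (Fin n))
    (G : Matrix (Fin n) (Fin m) ℝ) (u : EuclideanSpace ℝ (Fin m)) :
    vectorField (V * J0 * Vᵀ) (fun k => V * J k * Vᵀ) γ (mv V⁻¹ᵀ s) (mv V⁻¹ᵀ h) (V * G) u
      = mv V (vectorField J0 J γ s h G u) := by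
  have hsum : ∀ c : Fin N → ℝ, V * J0 * Vᵀ + ∑ k, c k • (V * J k * Vᵀ)
      = V * (J0 + ∑ k, c k • J k) * Vᵀ := fun c => by
    simp only [Matrix.mul_add, Matrix.add_mul, Finset.mul_sum, Finset.sum_mul, Matrix.mul_smul,
      Matrix.smul_mul]
  simp only [vectorField, bracket_congr hV, hsum, mv_congr_mv_transpose_inv hV, mv_mul V G,
    mv_add]

end RIPHS

theorem RIPHS_coordinate_transform_general
    (n N m : ℕ)
    (X : Set (EuclideanSpace ℝ (Fin n)))
    (J0 : EuclideanSpace ℝ (Fin n) → Matrix (Fin n) (Fin n) ℝ)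
    (H : EuclideanSpace ℝ (Fin n) → ℝ)
    (Hx : EuclideanSpace ℝ (Fin n) → EuclideanSpace ℝ (Fin n))
    (hH : ∀ p ∈ X, HasGradientAt H (Hx p) p)
    (S : EuclideanSpace ℝ (Fin n) → ℝ)
    (Sx : EuclideanSpace ℝ (Fin n) → EuclideanSpace ℝ (Fin n))
    (hS : ∀ p ∈ X, HasGradientAt S (Sx p) p)
    (hCasimir : ∀ p ∈ X, mv (J0 p) (Sx p) = 0)
    (J : Fin N → Matrix (Fin n) (Fin n) ℝ)
    (hJskew : ∀ k, (J k)ᵀ = -(J k))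
    (γ : Fin N → EuclideanSpace ℝ (Fin n) → ℝ)
    (g : EuclideanSpace ℝ (Fin n) → Matrix (Fin n) (Fin m) ℝ)
    -- a continuously differentiable solution x on [0, t_f] with continuous control u
    (tf : ℝ)
    (x : ℝ → EuclideanSpace ℝ (Fin n))
    (u : ℝ → EuclideanSpace ℝ (Fin m))
    (x' : ℝ → EuclideanSpace ℝ (Fin n))
    (hxdiff : ∀ t ∈ Icc 0 tf, HasDerivWithinAt x (x' t) (Icc 0 tf) t)
    (hdyn : ∀ t ∈ Icc 0 tf,
      x' t =
        mv (J0 (x t) + ∑ k, (γ k (x t) * bracket (J k) (Sx (x t)) (Hx (x t))) • J k)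
           (Hx (x t))
        + mv (g (x t)) (u t))
    -- an invertible coordinate transformation V
    (V : Matrix (Fin n) (Fin n) ℝ) (hV : IsUnit V.det) :
    -- the gradient of H̃(z) = H(V⁻¹ z) is V⁻ᵀ H_x(V⁻¹ z) on V(𝕏)
    (∀ z ∈ (fun p => mv V p) '' X,
      HasGradientAt (fun w => H (mv V⁻¹ w)) (mv V⁻¹ᵀ (Hx (mv V⁻¹ z))) z)
    -- the gradient of S̃(z) = S(V⁻¹ z) is V⁻ᵀ S_x(V⁻¹ z) on V(𝕏)
    ∧ (∀ z ∈ (fun p => mv V p) '' X,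
      HasGradientAt (fun w => S (mv V⁻¹ w)) (mv V⁻¹ᵀ (Sx (mv V⁻¹ z))) z)
    -- each J̃ₖ = V Jₖ Vᵀ is skew-symmetric
    ∧ (∀ k, (V * J k * Vᵀ)ᵀ = -(V * J k * Vᵀ))
    -- S̃ is a Casimir of J̃₀: J̃₀(z) S̃_z(z) = 0 on V(𝕏)
    ∧ (∀ z ∈ (fun p => mv V p) '' X,
        mv (V * J0 (mv V⁻¹ z) * Vᵀ) (mv V⁻¹ᵀ (Sx (mv V⁻¹ z))) = 0)
    -- z = Vx solves the transformed RIPHS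
    ∧ (∀ t ∈ Icc 0 tf,
        HasDerivWithinAt (fun s => mv V (x s))
          (mv (V * J0 (x t) * Vᵀ
                + ∑ k, (γ k (x t) *
                    bracket (V * J k * Vᵀ) (mv V⁻¹ᵀ (Sx (x t))) (mv V⁻¹ᵀ (Hx (x t)))) •
                      (V * J k * Vᵀ))
              (mv V⁻¹ᵀ (Hx (x t)))
            + mv (V * g (x t)) (u t))
          (Icc 0 tf) t) := by
  open RIPHS in
  refine ⟨?_, ?_, fun k => transpose_mul_mul_transpose_of_skew V (hJskew k), ?_, ?_⟩
  · rintro _ ⟨p, hp, rfl⟩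
    rw [mv_nonsing_inv_mv hV]
    exact hasGradientAt_comp_mv ((mv_nonsing_inv_mv hV p).symm ▸ hH p hp)
  · rintro _ ⟨p, hp, rfl⟩
    rw [mv_nonsing_inv_mv hV]
    exact hasGradientAt_comp_mv ((mv_nonsing_inv_mv hV p).symm ▸ hS p hp)
  · rintro _ ⟨p, hp, rfl⟩
    rw [mv_nonsing_inv_mv hV, mv_congr_mv_transpose_inv hV, hCasimir p hp, mv_zero]
  · intro t ht
    refine ((hxdiff t ht).mv V).congr_deriv ?_
    rw [hdyn t ht]
    exact (vectorField_congr hV (J0 (x t)) J (fun k => γ k (x t)) _ _ (g (x t)) (u t)).symm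

/-- The class of reversible-irreversible port-Hamiltonian systems is invariant
under invertible linear coordinate transforms `z = Vx`: with
`H̃(z) = H(V⁻¹z)`, `S̃(z) = S(V⁻¹z)`, `J̃₀(z) = V J₀(V⁻¹z) Vᵀ`, `J̃ₖ = V Jₖ Vᵀ`,
`γ̃ₖ(z) = γₖ(V⁻¹z)`, `g̃(z) = V g(V⁻¹z)`, the gradients satisfy
`H̃_z(z) = V⁻ᵀ H_x(V⁻¹z)` and `S̃_z(z) = V⁻ᵀ S_x(V⁻¹z)`, each `J̃ₖ` is
skew-symmetric, `S̃` is a Casimir of `J̃₀`, and `z = Vx` solves the transformed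
RIPHS. -/
theorem RIPHS_coordinate_transform
    (n N m : ℕ)
    (X : Set (EuclideanSpace ℝ (Fin n))) (hXopen : IsOpen X)
    (J0 : EuclideanSpace ℝ (Fin n) → Matrix (Fin n) (Fin n) ℝ)
    (hJ0cont : ContinuousOn J0 X)
    (hJ0skew : ∀ p ∈ X, (J0 p)ᵀ = -(J0 p))
    (H : EuclideanSpace ℝ (Fin n) → ℝ)
    (Hx : EuclideanSpace ℝ (Fin n) → EuclideanSpace ℝ (Fin n))
    (hH : ∀ p ∈ X, HasGradientAt H (Hx p) p)
    (hHxcont : ContinuousOn Hx X)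
    (S : EuclideanSpace ℝ (Fin n) → ℝ)
    (Sx : EuclideanSpace ℝ (Fin n) → EuclideanSpace ℝ (Fin n))
    (hS : ∀ p ∈ X, HasGradientAt S (Sx p) p)
    (hSxcont : ContinuousOn Sx X)
    (hCasimir : ∀ p ∈ X, mv (J0 p) (Sx p) = 0)
    (J : Fin N → Matrix (Fin n) (Fin n) ℝ)
    (hJskew : ∀ k, (J k)ᵀ = -(J k))
    (γ : Fin N → EuclideanSpace ℝ (Fin n) → ℝ)
    (hγpos : ∀ k, ∀ p ∈ X, 0 < γ k p)
    (hγcont : ∀ k, ContinuousOn (γ k) X)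
    (g : EuclideanSpace ℝ (Fin n) → Matrix (Fin n) (Fin m) ℝ)
    (hgcont : ContinuousOn g X)
    -- a continuously differentiable solution x on [0, t_f] with continuous control u
    (tf : ℝ) (htf : 0 ≤ tf)
    (x : ℝ → EuclideanSpace ℝ (Fin n))
    (u : ℝ → EuclideanSpace ℝ (Fin m))
    (hu : ContinuousOn u (Icc 0 tf))
    (hxmem : ∀ t ∈ Icc 0 tf, x t ∈ X)
    (x' : ℝ → EuclideanSpace ℝ (Fin n))
    (hx'cont : ContinuousOn x' (Icc 0 tf))
    (hxdiff : ∀ t ∈ Icc 0 tf, HasDerivWithinAt x (x' t) (Icc 0 tf) t)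
    (hdyn : ∀ t ∈ Icc 0 tf,
      x' t =
        mv (J0 (x t) + ∑ k, (γ k (x t) * bracket (J k) (Sx (x t)) (Hx (x t))) • J k)
           (Hx (x t))
        + mv (g (x t)) (u t))
    -- an invertible coordinate transformation V
    (V : Matrix (Fin n) (Fin n) ℝ) (hV : IsUnit V.det) :
    -- the gradient of H̃(z) = H(V⁻¹ z) is V⁻ᵀ H_x(V⁻¹ z) on V(𝕏)
    (∀ z ∈ (fun p => mv V p) '' X,
      HasGradientAt (fun w => H (mv V⁻¹ w)) (mv V⁻¹ᵀ (Hx (mv V⁻¹ z))) z)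
    -- the gradient of S̃(z) = S(V⁻¹ z) is V⁻ᵀ S_x(V⁻¹ z) on V(𝕏)
    ∧ (∀ z ∈ (fun p => mv V p) '' X,
      HasGradientAt (fun w => S (mv V⁻¹ w)) (mv V⁻¹ᵀ (Sx (mv V⁻¹ z))) z)
    -- each J̃ₖ = V Jₖ Vᵀ is skew-symmetric
    ∧ (∀ k, (V * J k * Vᵀ)ᵀ = -(V * J k * Vᵀ))
    -- S̃ is a Casimir of J̃₀: J̃₀(z) S̃_z(z) = 0 on V(𝕏)
    ∧ (∀ z ∈ (fun p => mv V p) '' X,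
        mv (V * J0 (mv V⁻¹ z) * Vᵀ) (mv V⁻¹ᵀ (Sx (mv V⁻¹ z))) = 0)
    -- z = Vx solves the transformed RIPHS
    ∧ (∀ t ∈ Icc 0 tf,
        HasDerivWithinAt (fun s => mv V (x s))
          (mv (V * J0 (x t) * Vᵀ
                + ∑ k, (γ k (x t) *
                    bracket (V * J k * Vᵀ) (mv V⁻¹ᵀ (Sx (x t))) (mv V⁻¹ᵀ (Hx (x t)))) •
                      (V * J k * Vᵀ))
              (mv V⁻¹ᵀ (Hx (x t)))
            + mv (V * g (x t)) (u t))
          (Icc 0 tf) t) :=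
  RIPHS_coordinate_transform_general n N m X J0 H Hx hH S Sx hS hCasimir J hJskew γ g tf x u x'
    hxdiff hdyn V hV
end

section
/- Let α₁, α₂ > 0 and T₀ > 0, and define the stage cost ℓ(x,u) = (α₁ g(x)ᵀH_x(x) − α₂ T₀ g(x)ᵀS_x(x))ᵀ u. If (x̄, ū) ∈ 𝕏 × ℝ^m is a steady state of the RIPHS, i.e., (J₀(x̄) + Σ_{k=1}^N γ_k(x̄) {S,H}_{J_k}(x̄) J_k) H_x(x̄) + g(x̄) ū = 0, then ℓ(x̄, ū) = α₂ T₀ · Σ_{k=1}^N γ_k(x̄) · ({S,H}_{J_k}(x̄))² ≥ 0. -/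
open Set Matrix

/-- The stage cost `ℓ(x,u) = (α₁ g(x)ᵀH_x(x) − α₂T₀ g(x)ᵀS_x(x))ᵀ u`. -/
noncomputable def stageCost {n m : ℕ} (α₁ α₂ T₀ : ℝ)
    (g : EuclideanSpace ℝ (Fin n) → Matrix (Fin n) (Fin m) ℝ)
    (Hx Sx : EuclideanSpace ℝ (Fin n) → EuclideanSpace ℝ (Fin n))
    (p : EuclideanSpace ℝ (Fin n)) (w : EuclideanSpace ℝ (Fin m)) : ℝ :=
  inner ℝ (α₁ • mv (g p)ᵀ (Hx p) - (α₂ * T₀) • mv (g p)ᵀ (Sx p)) w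

/-! The structure matrix `M = J₀ + ∑ₖ γₖ {S,H}_{Jₖ} Jₖ` of a RIPHS is skew-symmetric, so at a steady
state, where `g ū = -M Hₓ`, the Hamiltonian term `Hₓᵀ g ū = -Hₓᵀ M Hₓ` vanishes and the stage cost
reduces to `α₂ T₀ Sₓᵀ M Hₓ`. Skewness of `J₀` together with the Casimir property `J₀ Sₓ = 0` removes
the reversible part, and what remains is `∑ₖ γₖ {S,H}_{Jₖ}²`. -/

open scoped InnerProductSpace

section mv

variable {a b : ℕ}

theorem inner_mv_transpose_left (A : Matrix (Fin a) (Fin b) ℝ) (v : EuclideanSpace ℝ (Fin a))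
    (u : EuclideanSpace ℝ (Fin b)) : ⟪mv Aᵀ v, u⟫_ℝ = ⟪v, mv A u⟫_ℝ := by
  rw [mv, ← conjTranspose_eq_transpose_of_trivial, toEuclideanLin_conjTranspose_eq_adjoint,
    LinearMap.adjoint_inner_left, mv]

theorem mv_add_sum_smul {ι : Type*} (s : Finset ι) (A : Matrix (Fin a) (Fin b) ℝ)
    (c : ι → ℝ) (B : ι → Matrix (Fin a) (Fin b) ℝ) (x : EuclideanSpace ℝ (Fin b)) :
    mv (A + ∑ k ∈ s, c k • B k) x = mv A x + ∑ k ∈ s, c k • mv (B k) x := by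
  simp only [mv, map_add, map_sum, map_smul, LinearMap.add_apply, LinearMap.sum_apply,
    LinearMap.smul_apply]

end mv

section skew

variable {n : ℕ} {A : Matrix (Fin n) (Fin n) ℝ}

theorem inner_mv_of_transpose_eq_neg (hA : Aᵀ = -A) (x y : EuclideanSpace ℝ (Fin n)) :
    ⟪y, mv A x⟫_ℝ = -⟪mv A y, x⟫_ℝ := by
  rw [← inner_mv_transpose_left, hA, mv, mv, map_neg, LinearMap.neg_apply, inner_neg_left]

theorem inner_self_mv_of_transpose_eq_neg (hA : Aᵀ = -A) (x : EuclideanSpace ℝ (Fin n)) :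
    ⟪x, mv A x⟫_ℝ = 0 := by
  have h := inner_mv_of_transpose_eq_neg hA x x
  rw [real_inner_comm x] at h
  linarith

theorem transpose_add_sum_smul_of_transpose_eq_neg {ι : Type*} (s : Finset ι)
    (c : ι → ℝ) {B : ι → Matrix (Fin n) (Fin n) ℝ} (hA : Aᵀ = -A) (hB : ∀ k, (B k)ᵀ = -B k) :
    (A + ∑ k ∈ s, c k • B k)ᵀ = -(A + ∑ k ∈ s, c k • B k) := by
  simp only [transpose_add, transpose_sum, transpose_smul, hA, hB, smul_neg, Finset.sum_neg_distrib,
    neg_add]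

end skew

theorem stageCost_eq_of_steady {n m : ℕ} (α₁ α₂ T₀ : ℝ)
    (g : EuclideanSpace ℝ (Fin n) → Matrix (Fin n) (Fin m) ℝ)
    (Hx Sx : EuclideanSpace ℝ (Fin n) → EuclideanSpace ℝ (Fin n))
    (p : EuclideanSpace ℝ (Fin n)) (w : EuclideanSpace ℝ (Fin m))
    {M : Matrix (Fin n) (Fin n) ℝ} (hM : Mᵀ = -M) (hsteady : mv M (Hx p) + mv (g p) w = 0) :
    stageCost α₁ α₂ T₀ g Hx Sx p w = α₂ * T₀ * ⟪Sx p, mv M (Hx p)⟫_ℝ := by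
  have hgw : mv (g p) w = -mv M (Hx p) := eq_neg_of_add_eq_zero_right hsteady
  rw [stageCost, inner_sub_left, real_inner_smul_left, real_inner_smul_left,
    inner_mv_transpose_left, inner_mv_transpose_left, hgw, inner_neg_right, inner_neg_right,
    inner_self_mv_of_transpose_eq_neg hM]
  ring

theorem inner_mv_add_sum_smul_of_casimir {n : ℕ} {ι : Type*} (s : Finset ι)
    {J₀ : Matrix (Fin n) (Fin n) ℝ} (hJ₀ : J₀ᵀ = -J₀) (c : ι → ℝ) (J : ι → Matrix (Fin n) (Fin n) ℝ)
    {Sx : EuclideanSpace ℝ (Fin n)} (hCasimir : mv J₀ Sx = 0) (Hx : EuclideanSpace ℝ (Fin n)) :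
    ⟪Sx, mv (J₀ + ∑ k ∈ s, c k • J k) Hx⟫_ℝ = ∑ k ∈ s, c k * bracket (J k) Sx Hx := by
  rw [mv_add_sum_smul, inner_add_right, inner_mv_of_transpose_eq_neg hJ₀, hCasimir, inner_zero_left,
    neg_zero, zero_add, inner_sum]
  simp only [inner_smul_right, bracket]

theorem steady_state_stage_cost_general
    (n N m : ℕ)
    (X : Set (EuclideanSpace ℝ (Fin n)))
    (J0 : EuclideanSpace ℝ (Fin n) → Matrix (Fin n) (Fin n) ℝ)
    (hJ0skew : ∀ p ∈ X, (J0 p)ᵀ = -(J0 p))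
    (Hx : EuclideanSpace ℝ (Fin n) → EuclideanSpace ℝ (Fin n))
    (Sx : EuclideanSpace ℝ (Fin n) → EuclideanSpace ℝ (Fin n))
    (hCasimir : ∀ p ∈ X, mv (J0 p) (Sx p) = 0)
    (J : Fin N → Matrix (Fin n) (Fin n) ℝ)
    (hJskew : ∀ k, (J k)ᵀ = -(J k))
    (γ : Fin N → EuclideanSpace ℝ (Fin n) → ℝ)
    (hγpos : ∀ k, ∀ p ∈ X, 0 < γ k p)
    (g : EuclideanSpace ℝ (Fin n) → Matrix (Fin n) (Fin m) ℝ)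
    (α₁ α₂ T₀ : ℝ) (hα₂ : 0 < α₂) (hT₀ : 0 < T₀)
    -- (xbar, ubar) is a steady state of the RIPHS
    (xbar : EuclideanSpace ℝ (Fin n)) (hxbar : xbar ∈ X)
    (ubar : EuclideanSpace ℝ (Fin m))
    (hsteady :
      mv (J0 xbar + ∑ k, (γ k xbar * bracket (J k) (Sx xbar) (Hx xbar)) • J k) (Hx xbar)
        + mv (g xbar) ubar = 0) :
    stageCost α₁ α₂ T₀ g Hx Sx xbar ubar
        = α₂ * T₀ * ∑ k, γ k xbar * (bracket (J k) (Sx xbar) (Hx xbar))^2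
    ∧ 0 ≤ α₂ * T₀ * ∑ k, γ k xbar * (bracket (J k) (Sx xbar) (Hx xbar))^2 := by
  have hJ0 := hJ0skew xbar hxbar
  have hsum : 0 ≤ ∑ k, γ k xbar * (bracket (J k) (Sx xbar) (Hx xbar))^2 :=
    Finset.sum_nonneg fun k _ => mul_nonneg (hγpos k xbar hxbar).le (sq_nonneg _)
  refine ⟨?_, mul_nonneg (by positivity) hsum⟩
  rw [stageCost_eq_of_steady α₁ α₂ T₀ g Hx Sx xbar ubar
      (transpose_add_sum_smul_of_transpose_eq_neg _ _ hJ0 hJskew) hsteady,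
    inner_mv_add_sum_smul_of_casimir _ hJ0 _ J (hCasimir xbar hxbar)]
  simp only [mul_assoc, sq]

/-- At any steady state `(xbar, ubar)` of a RIPHS, the stage cost equals
`α₂T₀ Σ_k γ_k(xbar) ({S,H}_{J_k}(xbar))² ≥ 0`. -/
theorem steady_state_stage_cost
    (n N m : ℕ)
    (X : Set (EuclideanSpace ℝ (Fin n))) (hXopen : IsOpen X)
    (J0 : EuclideanSpace ℝ (Fin n) → Matrix (Fin n) (Fin n) ℝ)
    (hJ0cont : ContinuousOn J0 X)
    (hJ0skew : ∀ p ∈ X, (J0 p)ᵀ = -(J0 p))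
    (H : EuclideanSpace ℝ (Fin n) → ℝ)
    (Hx : EuclideanSpace ℝ (Fin n) → EuclideanSpace ℝ (Fin n))
    (hH : ∀ p ∈ X, HasGradientAt H (Hx p) p)
    (hHxcont : ContinuousOn Hx X)
    (S : EuclideanSpace ℝ (Fin n) → ℝ)
    (Sx : EuclideanSpace ℝ (Fin n) → EuclideanSpace ℝ (Fin n))
    (hS : ∀ p ∈ X, HasGradientAt S (Sx p) p)
    (hSxcont : ContinuousOn Sx X)
    (hCasimir : ∀ p ∈ X, mv (J0 p) (Sx p) = 0)
    (J : Fin N → Matrix (Fin n) (Fin n) ℝ)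
    (hJskew : ∀ k, (J k)ᵀ = -(J k))
    (γ : Fin N → EuclideanSpace ℝ (Fin n) → ℝ)
    (hγpos : ∀ k, ∀ p ∈ X, 0 < γ k p)
    (hγcont : ∀ k, ContinuousOn (γ k) X)
    (g : EuclideanSpace ℝ (Fin n) → Matrix (Fin n) (Fin m) ℝ)
    (hgcont : ContinuousOn g X)
    (α₁ α₂ T₀ : ℝ) (hα₁ : 0 < α₁) (hα₂ : 0 < α₂) (hT₀ : 0 < T₀)
    -- (xbar, ubar) is a steady state of the RIPHS
    (xbar : EuclideanSpace ℝ (Fin n)) (hxbar : xbar ∈ X)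
    (ubar : EuclideanSpace ℝ (Fin m))
    (hsteady :
      mv (J0 xbar + ∑ k, (γ k xbar * bracket (J k) (Sx xbar) (Hx xbar)) • J k) (Hx xbar)
        + mv (g xbar) ubar = 0) :
    stageCost α₁ α₂ T₀ g Hx Sx xbar ubar
        = α₂ * T₀ * ∑ k, γ k xbar * (bracket (J k) (Sx xbar) (Hx xbar))^2
    ∧ 0 ≤ α₂ * T₀ * ∑ k, γ k xbar * (bracket (J k) (Sx xbar) (Hx xbar))^2 :=
  steady_state_stage_cost_general n N m X J0 hJ0skew Hx Sx hCasimir J hJskew γ hγpos g α₁ α₂ T₀ hα₂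
    hT₀ xbar hxbar ubar hsteady
end

section
/- Assume: H ∈ C²(𝕏, ℝ), the image 𝕐 := H_x(𝕏) is open in ℝⁿ, and H_x : 𝕏 → 𝕐 is a C¹-diffeomorphism; S(x) = eᵀx with e ∈ ℝⁿ \ {0}; γ_k : 𝕏 → (0,∞) are continuous for k = 1,…,N. Let V := ⋂_{k=1}^N (J_k e)^⊥ and assume V ∩ 𝕐 ≠ ∅. Then for every compact set K ⊆ 𝕏 there exists c > 0 such that for all x ∈ K: dist(x, 𝒯)² ≤ c · Σ_{k=1}^N γ_k(x) · ({S,H}_{J_k}(x))², where dist(x, 𝒯) = inf_{y ∈ 𝒯} ‖x − y‖. -/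
open Set Matrix Metric

/-!
Put `Φ y = (⟪e, J_k y⟫)_k`, so that `𝒯 = X ∩ H_x⁻¹(ker Φ)`. Since `Φ` is injective on
`(ker Φ)ᗮ`, the orthogonal projection `y'` of `y = H_x(x)` onto `ker Φ` satisfies
`‖y - y'‖ ≤ C ‖Φ y‖`. Near a point of `𝒯`, `y'` stays in `𝕐` and in a neighbourhood on which the inverse
of `H_x` is Lipschitz, so its preimage is a point of `𝒯` within `L C ‖Φ y‖` of `x`. Away from `𝒯`,
`‖Φ (H_x x)‖` is bounded below and the estimate is trivial. Compactness of `K` patches the local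
constants together, and the weights `γ_k` are bounded below on `K`.
-/

open Filter Topology

lemma Filter.Tendsto.exists_eventually_le_mul {α : Type*} {l : Filter α} {f g : α → ℝ} {a b : ℝ}
    (hg : Tendsto g l (𝓝 a)) (hf : Tendsto f l (𝓝 b)) (hb : 0 < b) :
    ∃ c, ∀ᶠ x in l, g x ≤ c * f x := by
  refine ⟨a / b + 1, ?_⟩
  filter_upwards [(hg.div hf hb.ne').eventually (gt_mem_nhds (lt_add_one (a / b))),
    hf.eventually (lt_mem_nhds hb)] with x hx hfx
  rw [← div_le_iff₀ hfx]
  exact hx.le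

lemma IsCompact.exists_le_mul_of_eventually_le {α : Type*} [TopologicalSpace α] {K : Set α}
    (hK : IsCompact K) {f g : α → ℝ} (hf : 0 ≤ f)
    (hloc : ∀ x ∈ K, ∃ c, ∀ᶠ y in 𝓝[K] x, g y ≤ c * f y) :
    ∃ c > 0, ∀ x ∈ K, g x ≤ c * f x := by
  suffices ∃ c, ∀ x ∈ K, g x ≤ c * f x by
    obtain ⟨c, hc⟩ := this
    exact ⟨max c 1, by positivity, fun x hx =>
      (hc x hx).trans (mul_le_mul_of_nonneg_right (le_max_left c 1) (hf x))⟩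
  refine hK.induction_on (p := fun s => ∃ c, ∀ x ∈ s, g x ≤ c * f x) ⟨0, fun x hx => hx.elim⟩
    (fun s t hst ⟨c, hc⟩ => ⟨c, fun x hx => hc x (hst hx)⟩) ?_ ?_
  · rintro s t ⟨c, hc⟩ ⟨d, hd⟩
    refine ⟨max c d, fun x hx => ?_⟩
    rcases hx with hx | hx
    · exact (hc x hx).trans (mul_le_mul_of_nonneg_right (le_max_left c d) (hf x))
    · exact (hd x hx).trans (mul_le_mul_of_nonneg_right (le_max_right c d) (hf x))
  · intro x hx
    obtain ⟨c, hc⟩ := hloc x hx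
    exact ⟨{y | g y ≤ c * f y}, hc, c, fun y hy => hy⟩

lemma Finset.sum_le_sum_inv_mul_sum_mul {ι : Type*} (s : Finset ι) {w b : ι → ℝ}
    (hw : ∀ i ∈ s, 0 < w i) (hb : ∀ i ∈ s, 0 ≤ b i) :
    ∑ i ∈ s, b i ≤ (∑ i ∈ s, (w i)⁻¹) * ∑ i ∈ s, w i * b i := by
  rw [Finset.sum_mul]
  refine Finset.sum_le_sum fun i hi => ?_
  calc b i = (w i)⁻¹ * (w i * b i) := by field_simp [(hw i hi).ne']
    _ ≤ (w i)⁻¹ * ∑ j ∈ s, w j * b j :=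
      mul_le_mul_of_nonneg_left
        (Finset.single_le_sum (fun j hj => mul_nonneg (hw j hj).le (hb j hj)) hi)
        (inv_pos.2 (hw i hi)).le

lemma IsCompact.exists_sum_le_mul_sum_mul {α ι : Type*} [TopologicalSpace α] [Fintype ι]
    {K : Set α} (hK : IsCompact K) {w : ι → α → ℝ} (hw : ∀ i, ContinuousOn (w i) K)
    (hpos : ∀ i, ∀ x ∈ K, 0 < w i x) :
    ∃ B > 0, ∀ x ∈ K, ∀ b : ι → ℝ, 0 ≤ b → ∑ i, b i ≤ B * ∑ i, w i x * b i := by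
  obtain ⟨B, hB⟩ := hK.exists_bound_of_continuousOn (f := fun x => ∑ i, (w i x)⁻¹)
    (continuousOn_finsetSum _ fun i _ => (hw i).inv₀ fun x hx => (hpos i x hx).ne')
  refine ⟨max B 1, by positivity, fun x hx b hb => ?_⟩
  calc ∑ i, b i ≤ (∑ i, (w i x)⁻¹) * ∑ i, w i x * b i :=
        Finset.sum_le_sum_inv_mul_sum_mul _ (fun i _ => hpos i x hx) (fun i _ => hb i)
    _ ≤ max B 1 * ∑ i, w i x * b i :=
        mul_le_mul_of_nonneg_right (((le_abs_self _).trans (hB x hx)).trans (le_max_left B 1))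
          (Finset.sum_nonneg fun i _ => mul_nonneg (hpos i x hx).le (hb i))

section

variable {D E F : Type*} [NormedAddCommGroup D] [NormedSpace ℝ D]
  [NormedAddCommGroup E] [InnerProductSpace ℝ E] [FiniteDimensional ℝ E]
  [NormedAddCommGroup F] [NormedSpace ℝ F]

lemma LinearMap.exists_norm_sub_starProjection_ker_le (Φ : E →ₗ[ℝ] F) :
    ∃ C, ∀ y, ‖y - (LinearMap.ker Φ).starProjection y‖ ≤ C * ‖Φ y‖ := by
  set V := LinearMap.ker Φ
  have hinj : LinearMap.ker (Φ ∘ₗ Vᗮ.subtype) = ⊥ := by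
    rw [LinearMap.ker_eq_bot']
    intro w hw
    exact Subtype.ext (Submodule.inf_orthogonal_eq_bot V |>.le ⟨hw, w.2⟩)
  obtain ⟨C, -, hC⟩ := (Φ ∘ₗ Vᗮ.subtype).exists_antilipschitzWith hinj
  refine ⟨C, fun y => ?_⟩
  have hΦ : Φ (y - V.starProjection y) = Φ y := by
    rw [map_sub, LinearMap.mem_ker.mp (V.starProjection_apply_mem y), sub_zero]
  simpa [dist_eq_norm, hΦ] using hC.le_mul_dist ⟨_, V.sub_starProjection_mem_orthogonal y⟩ 0

lemma exists_eventually_infDist_le_mul_norm {X : Set D} {G : D → E} {Ginv : E → D} (Φ : E →ₗ[ℝ] F)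
    (hG : ContinuousOn G X) (hY : IsOpen (G '' X)) (hleft : ∀ p ∈ X, Ginv (G p) = p)
    (hGinv : ContDiffOn ℝ 1 Ginv (G '' X)) {x₀ : D} (hx₀ : x₀ ∈ X) (hx₀T : Φ (G x₀) = 0) :
    ∃ c, ∀ᶠ x in 𝓝[X] x₀, infDist x {p ∈ X | Φ (G p) = 0} ≤ c * ‖Φ (G x)‖ := by
  set P := (LinearMap.ker Φ).starProjection
  obtain ⟨C, hC⟩ := Φ.exists_norm_sub_starProjection_ker_le
  have hY₀ : G '' X ∈ 𝓝 (G x₀) := hY.mem_nhds ⟨x₀, hx₀, rfl⟩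
  obtain ⟨L, t, ht, hL⟩ := (hGinv.contDiffAt hY₀).exists_lipschitzOnWith
  have hGx : Tendsto G (𝓝[X] x₀) (𝓝 (G x₀)) := hG x₀ hx₀
  have hPGx : Tendsto (P ∘ G) (𝓝[X] x₀) (𝓝 (G x₀)) := by
    simpa [P, Submodule.starProjection_eq_self_iff.mpr (LinearMap.mem_ker.mpr hx₀T)] using
      (P.continuous.tendsto (G x₀)).comp hGx
  refine ⟨L * C, ?_⟩
  filter_upwards [self_mem_nhdsWithin, hGx ht, hPGx (inter_mem ht hY₀)]
    with x hx hxt ⟨hPt, p, hp, hpP⟩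
  have hpT : p ∈ {p ∈ X | Φ (G p) = 0} :=
    ⟨hp, hpP ▸ (LinearMap.ker Φ).starProjection_apply_mem _⟩
  calc infDist x {p ∈ X | Φ (G p) = 0} ≤ dist (Ginv (G x)) (Ginv (G p)) := by
        rw [hleft x hx, hleft p hp]; exact infDist_le_dist_of_mem hpT
    _ ≤ L * dist (G x) (G p) := hL.dist_le_mul _ hxt _ (hpP ▸ hPt)
    _ ≤ L * (C * ‖Φ (G x)‖) := by
        rw [hpP, dist_eq_norm]; exact mul_le_mul_of_nonneg_left (hC _) L.2
    _ = L * C * ‖Φ (G x)‖ := by ring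

theorem IsCompact.exists_infDist_le_mul_norm {X K : Set D} {G : D → E} {Ginv : E → D}
    (Φ : E →ₗ[ℝ] F) (hK : IsCompact K) (hKX : K ⊆ X) (hG : ContinuousOn G X)
    (hY : IsOpen (G '' X)) (hleft : ∀ p ∈ X, Ginv (G p) = p)
    (hGinv : ContDiffOn ℝ 1 Ginv (G '' X)) :
    ∃ c > 0, ∀ x ∈ K, infDist x {p ∈ X | Φ (G p) = 0} ≤ c * ‖Φ (G x)‖ := by
  refine hK.exists_le_mul_of_eventually_le (fun _ => norm_nonneg _) fun x₀ hx₀ => ?_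
  by_cases hx₀T : Φ (G x₀) = 0
  · obtain ⟨c, hc⟩ := exists_eventually_infDist_le_mul_norm Φ hG hY hleft hGinv (hKX hx₀) hx₀T
    exact ⟨c, hc.filter_mono (nhdsWithin_mono x₀ hKX)⟩
  · have hΦG : ContinuousOn (fun x => ‖Φ (G x)‖) K :=
      (Φ.continuous_of_finiteDimensional.comp_continuousOn (hG.mono hKX)).norm
    exact ((continuous_infDist_pt _).continuousWithinAt).exists_eventually_le_mul
      (hΦG x₀ hx₀) (norm_pos_iff.mpr hx₀T)

end

theorem dist_to_equilibria_sq_le_general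
    (n N : ℕ)
    (X : Set (EuclideanSpace ℝ (Fin n)))
    -- H ∈ C², with gradient Hx and Hessian Hxx
    (Hx : EuclideanSpace ℝ (Fin n) → EuclideanSpace ℝ (Fin n))
    (Hxx : EuclideanSpace ℝ (Fin n) → Matrix (Fin n) (Fin n) ℝ)
    (hHx : ∀ p ∈ X,
      HasFDerivAt Hx (LinearMap.toContinuousLinearMap (Matrix.toEuclideanLin (Hxx p))) p)
    -- 𝕐 = H_x(𝕏) is open and H_x : 𝕏 → 𝕐 is a C¹-diffeomorphism with inverse Hinv
    (hYopen : IsOpen (Hx '' X))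
    (Hinv : EuclideanSpace ℝ (Fin n) → EuclideanSpace ℝ (Fin n))
    (hHinvleft : ∀ p ∈ X, Hinv (Hx p) = p)
    (hHinvC1 : ContDiffOn ℝ 1 Hinv (Hx '' X))
    -- entropy S(x) = eᵀ x, e ≠ 0
    (e : EuclideanSpace ℝ (Fin n))
    -- skew-symmetric structure matrices and positive continuous γ_k
    (J : Fin N → Matrix (Fin n) (Fin n) ℝ)
    (γ : Fin N → EuclideanSpace ℝ (Fin n) → ℝ)
    (hγpos : ∀ k, ∀ p ∈ X, 0 < γ k p)
    (hγcont : ∀ k, ContinuousOn (γ k) X)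
    -- the set of thermodynamic equilibria
    (T : Set (EuclideanSpace ℝ (Fin n)))
    (hT : T = {p ∈ X | ∀ k, (inner ℝ e (mv (J k) (Hx p)) : ℝ) = 0}) :
    ∀ K ⊆ X, IsCompact K → ∃ c > 0, ∀ x ∈ K,
      infDist x T ^ 2 ≤ c * ∑ k, γ k x * (inner ℝ e (mv (J k) (Hx x)) : ℝ) ^ 2 := by
  intro K hKX hK
  let Φ : EuclideanSpace ℝ (Fin n) →ₗ[ℝ] EuclideanSpace ℝ (Fin N) :=
    (WithLp.linearEquiv 2 ℝ (Fin N → ℝ)).symm.toLinearMap ∘ₗ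
      LinearMap.pi fun k => innerₛₗ ℝ e ∘ₗ Matrix.toEuclideanLin (J k)
  have hΦ : ∀ y, ‖Φ y‖ ^ 2 = ∑ k, (inner ℝ e (mv (J k) y) : ℝ) ^ 2 := by
    simp [EuclideanSpace.norm_sq_eq, Φ, mv]
  have hTΦ : T = {p ∈ X | Φ (Hx p) = 0} := by
    simp [hT, Φ, mv, funext_iff]
  obtain ⟨c, hc, hcK⟩ := hK.exists_infDist_le_mul_norm Φ hKX
    (fun p hp => (hHx p hp).continuousAt.continuousWithinAt) hYopen hHinvleft hHinvC1
  obtain ⟨B, hBpos, hB⟩ := hK.exists_sum_le_mul_sum_mul (fun k => (hγcont k).mono hKX)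
    (fun k x hx => hγpos k x (hKX hx))
  refine ⟨c ^ 2 * B, by positivity, fun x hx => ?_⟩
  calc infDist x T ^ 2 ≤ (c * ‖Φ (Hx x)‖) ^ 2 := by
        rw [hTΦ]; exact pow_le_pow_left₀ infDist_nonneg (hcK x hx) 2
    _ = c ^ 2 * ∑ k, (inner ℝ e (mv (J k) (Hx x)) : ℝ) ^ 2 := by rw [mul_pow, hΦ]
    _ ≤ c ^ 2 * (B * ∑ k, γ k x * (inner ℝ e (mv (J k) (Hx x)) : ℝ) ^ 2) := by
        gcongr; exact hB x hx _ fun k => sq_nonneg _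
    _ = c ^ 2 * B * ∑ k, γ k x * (inner ℝ e (mv (J k) (Hx x)) : ℝ) ^ 2 := by ring

/-- Quantitative estimate of the distance to the set of thermodynamic equilibria:
if `H_x : 𝕏 → 𝕐` is a C¹-diffeomorphism onto the open set `𝕐 = H_x(𝕏)`,
`S(x) = eᵀx` with `e ≠ 0`, and `V = ⋂_k (J_k e)^⊥` meets `𝕐`, then on every compact
`K ⊆ 𝕏` one has `dist(x,𝒯)² ≤ c Σ_k γ_k(x) ({S,H}_{J_k}(x))²`. -/
theorem dist_to_equilibria_sq_le
    (n N : ℕ)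
    (X : Set (EuclideanSpace ℝ (Fin n))) (hXopen : IsOpen X)
    -- H ∈ C², with gradient Hx and Hessian Hxx
    (H : EuclideanSpace ℝ (Fin n) → ℝ)
    (Hx : EuclideanSpace ℝ (Fin n) → EuclideanSpace ℝ (Fin n))
    (Hxx : EuclideanSpace ℝ (Fin n) → Matrix (Fin n) (Fin n) ℝ)
    (hH : ∀ p ∈ X, HasGradientAt H (Hx p) p)
    (hHx : ∀ p ∈ X,
      HasFDerivAt Hx (LinearMap.toContinuousLinearMap (Matrix.toEuclideanLin (Hxx p))) p)
    (hHxxcont : ContinuousOn Hxx X)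
    -- 𝕐 = H_x(𝕏) is open and H_x : 𝕏 → 𝕐 is a C¹-diffeomorphism with inverse Hinv
    (hYopen : IsOpen (Hx '' X))
    (Hinv : EuclideanSpace ℝ (Fin n) → EuclideanSpace ℝ (Fin n))
    (hHinvmaps : ∀ y ∈ Hx '' X, Hinv y ∈ X)
    (hHinvleft : ∀ p ∈ X, Hinv (Hx p) = p)
    (hHinvC1 : ContDiffOn ℝ 1 Hinv (Hx '' X))
    -- entropy S(x) = eᵀ x, e ≠ 0
    (e : EuclideanSpace ℝ (Fin n)) (he : e ≠ 0)
    -- skew-symmetric structure matrices and positive continuous γ_k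
    (J : Fin N → Matrix (Fin n) (Fin n) ℝ)
    (hJskew : ∀ k, (J k)ᵀ = -(J k))
    (γ : Fin N → EuclideanSpace ℝ (Fin n) → ℝ)
    (hγpos : ∀ k, ∀ p ∈ X, 0 < γ k p)
    (hγcont : ∀ k, ContinuousOn (γ k) X)
    -- V = ⋂_k (J_k e)^⊥ meets 𝕐
    (hVY : ({y : EuclideanSpace ℝ (Fin n) | ∀ k, (inner ℝ y (mv (J k) e) : ℝ) = 0}
        ∩ (Hx '' X)).Nonempty)
    -- the set of thermodynamic equilibria
    (T : Set (EuclideanSpace ℝ (Fin n)))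
    (hT : T = {p ∈ X | ∀ k, (inner ℝ e (mv (J k) (Hx p)) : ℝ) = 0}) :
    ∀ K ⊆ X, IsCompact K → ∃ c > 0, ∀ x ∈ K,
      infDist x T ^ 2 ≤ c * ∑ k, γ k x * (inner ℝ e (mv (J k) (Hx x)) : ℝ) ^ 2 :=
  dist_to_equilibria_sq_le_general n N X Hx Hxx hHx hYopen Hinv hHinvleft hHinvC1 e J γ hγpos hγcont
    T hT
end

section
/- Let V₁, …, V_N ⊆ ℝⁿ be linear subspaces. Then there exist constants c₁, c₂ > 0 such that for all x ∈ ℝⁿ: c₁ · Σ_{k=1}^N dist(x, V_k) ≤ dist(x, ⋂_{k=1}^N V_k) ≤ c₂ · Σ_{k=1}^N dist(x, V_k). -/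
/-!
The lower bound holds because `⋂ Vₖ ⊆ Vₖ`. For the upper bound, the distance to a closed subspace
`V` is the quotient norm on `E ⧸ V`, and `E ⧸ ⋂ Vₖ → ∏ₖ E ⧸ Vₖ` is an injective linear map on a
finite-dimensional space, hence antilipschitz.
-/

open Set Metric

namespace Submodule

theorem Quotient.norm_mk {R M : Type*} [Ring R] [SeminormedAddCommGroup M] [Module R M]
    (S : Submodule R M) (x : M) : ‖(Quotient.mk x : M ⧸ S)‖ = infDist x S :=
  QuotientAddGroup.norm_mk (S := S.toAddSubgroup) x

variable {R M ι : Type*} [Ring R] [AddCommGroup M] [Module R M]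

def quotientIInfToPiQuotient (V : ι → Submodule R M) : (M ⧸ ⨅ i, V i) →ₗ[R] ∀ i, M ⧸ V i :=
  (⨅ i, V i).liftQ (LinearMap.pi fun i => (V i).mkQ) (by simp [LinearMap.ker_pi])

theorem ker_quotientIInfToPiQuotient (V : ι → Submodule R M) :
    LinearMap.ker (quotientIInfToPiQuotient V) = ⊥ :=
  ker_liftQ_eq_bot' _ _ (by simp [LinearMap.ker_pi])

end Submodule

theorem sum_infDist_le_card_mul_infDist_iInter {α ι : Type*} [PseudoMetricSpace α] [Fintype ι]
    {s : ι → Set α} (hs : (⋂ i, s i).Nonempty) (x : α) :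
    ∑ i, infDist x (s i) ≤ Fintype.card ι * infDist x (⋂ i, s i) := by
  calc ∑ i, infDist x (s i) ≤ ∑ _i : ι, infDist x (⋂ i, s i) :=
        Finset.sum_le_sum fun i _ => infDist_le_infDist_of_subset (iInter_subset s i) hs
    _ = Fintype.card ι * infDist x (⋂ i, s i) := by simp

theorem exists_infDist_iInter_le_mul_sum_infDist {𝕜 E ι : Type*} [NontriviallyNormedField 𝕜]
    [CompleteSpace 𝕜] [NormedAddCommGroup E] [NormedSpace 𝕜 E] [FiniteDimensional 𝕜 E]
    [Fintype ι] (V : ι → Submodule 𝕜 E) :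
    ∃ C > (0 : ℝ), ∀ x : E, infDist x (⋂ i, (V i : Set E)) ≤ C * ∑ i, infDist x (V i : Set E) := by
  -- makes the quotients normed rather than seminormed, as `exists_antilipschitzWith` needs
  have (W : Submodule 𝕜 E) : IsClosed (W : Set E) := W.closed_of_finiteDimensional
  obtain ⟨K, hK, hanti⟩ :=
    (Submodule.quotientIInfToPiQuotient V).exists_antilipschitzWith
      (Submodule.ker_quotientIInfToPiQuotient V)
  refine ⟨K, hK, fun x => ?_⟩
  calc infDist x (⋂ i, (V i : Set E)) = ‖(Submodule.Quotient.mk x : E ⧸ ⨅ i, V i)‖ := by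
        rw [← Submodule.coe_iInf, Submodule.Quotient.norm_mk]
    _ ≤ K * ‖fun i => (Submodule.Quotient.mk x : E ⧸ V i)‖ :=
        ZeroHomClass.bound_of_antilipschitz _ hanti _
    _ ≤ K * ∑ i, ‖(Submodule.Quotient.mk x : E ⧸ V i)‖ := by
        gcongr
        exact pi_norm_le_iff_of_nonneg (by positivity) |>.2 fun i =>
          Finset.single_le_sum (f := fun j => ‖(Submodule.Quotient.mk x : E ⧸ V j)‖)
            (fun j _ => norm_nonneg _) (Finset.mem_univ i)
    _ = K * ∑ i, infDist x (V i : Set E) := by simp [Submodule.Quotient.norm_mk]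

/-- Equivalence of the distance to an intersection of linear subspaces of `ℝⁿ` with the
sum of the distances: there are `c₁, c₂ > 0` with
`c₁ Σ_k dist(x,V_k) ≤ dist(x, ⋂_k V_k) ≤ c₂ Σ_k dist(x,V_k)` for all `x`. -/
theorem dist_iInter_subspaces_equiv_sum_dists
    (n N : ℕ) (V : Fin N → Submodule ℝ (EuclideanSpace ℝ (Fin n))) :
    ∃ c₁ > (0:ℝ), ∃ c₂ > (0:ℝ), ∀ x : EuclideanSpace ℝ (Fin n),
      c₁ * ∑ k, infDist x (V k : Set (EuclideanSpace ℝ (Fin n)))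
          ≤ infDist x (⋂ k, (V k : Set (EuclideanSpace ℝ (Fin n))))
      ∧ infDist x (⋂ k, (V k : Set (EuclideanSpace ℝ (Fin n))))
          ≤ c₂ * ∑ k, infDist x (V k : Set (EuclideanSpace ℝ (Fin n))) := by
  obtain ⟨c₂, hc₂, hupper⟩ := exists_infDist_iInter_le_mul_sum_infDist V
  refine ⟨(N + 1 : ℝ)⁻¹, by positivity, c₂, hc₂, fun x => ⟨?_, hupper x⟩⟩
  have hlower := sum_infDist_le_card_mul_infDist_iInter
    (s := fun k => (V k : Set (EuclideanSpace ℝ (Fin n)))) ⟨0, mem_iInter.2 fun k => (V k).zero_mem⟩ x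
  rw [Fintype.card_fin] at hlower
  rw [inv_mul_le_iff₀ (by positivity)]
  exact hlower.trans (mul_le_mul_of_nonneg_right (by linarith) infDist_nonneg)
end

section
/- Let A₁, …, A_N ⊆ ℝⁿ be affine subspaces (translates of linear subspaces) with ⋂_{k=1}^N A_k ≠ ∅. Then there exists a constant c > 0 such that for all x ∈ ℝⁿ: dist(x, ⋂_{k=1}^N A_k) ≤ c · Σ_{k=1}^N dist(x, A_k). -/
/-!
After translating by a common point `p`, the sets become linear subspaces `U k`. The linear map
`T y = (P_{(U k)ᗮ} y)ₖ` has kernel `⋂ U k`, and `‖P_{(U k)ᗮ} y‖ = dist(y, U k)`. On a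
finite-dimensional space `T` is bounded below on `(ker T)ᗮ`, which bounds `dist(y, ker T)` by a
multiple of `‖T y‖ ≤ Σₖ dist(y, U k)`.
-/

open Set Metric
open scoped Pointwise

theorem Metric.infDist_vadd_set {G X : Type*} [AddGroup G] [PseudoMetricSpace X] [AddAction G X]
    [IsIsometricVAdd G X] (c : G) (x : X) (s : Set X) :
    infDist x (c +ᵥ s) = infDist (-c +ᵥ x) s := by
  conv_lhs => rw [← vadd_neg_vadd c x]
  exact infDist_image (isometry_vadd X c)

section InnerProductSpace

variable {𝕜 E : Type*} [RCLike 𝕜] [NormedAddCommGroup E] [InnerProductSpace 𝕜 E]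

theorem Submodule.infDist_eq_norm_starProjection_orthogonal (K : Submodule 𝕜 E)
    [K.HasOrthogonalProjection] (y : E) : infDist y K = ‖Kᗮ.starProjection y‖ := by
  rw [starProjection_orthogonal_val, starProjection_minimal, infDist_eq_iInf]
  simp_rw [dist_eq_norm]
  rfl

theorem LinearMap.exists_infDist_ker_le_mul_norm [FiniteDimensional 𝕜 E] {F : Type*}
    [NormedAddCommGroup F] [NormedSpace 𝕜 F] (T : E →ₗ[𝕜] F) :
    ∃ C > 0, ∀ y, infDist y (ker T : Set E) ≤ C * ‖T y‖ := by
  set K := ker T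
  have hinj : ker (T ∘ₗ Kᗮ.subtype) = ⊥ := by
    rw [ker_comp, ← Submodule.disjoint_iff_comap_eq_bot]
    exact K.orthogonal_disjoint.symm
  obtain ⟨C, hC, hT⟩ := (T ∘ₗ Kᗮ.subtype).exists_antilipschitzWith hinj
  refine ⟨C, hC, fun y => ?_⟩
  have hTy : T (Kᗮ.starProjection y) = T y := by
    rw [Submodule.starProjection_orthogonal_val, map_sub, K.starProjection_apply,
      mem_ker.mp (K.orthogonalProjectionOnto y).2, sub_zero]
  rw [K.infDist_eq_norm_starProjection_orthogonal, ← hTy]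
  simpa using hT.le_mul_norm_sub 0 (Kᗮ.orthogonalProjectionOnto y)

theorem Submodule.exists_infDist_iInf_le_mul_sum [FiniteDimensional 𝕜 E] {ι : Type*} [Fintype ι]
    (U : ι → Submodule 𝕜 E) :
    ∃ C > 0, ∀ y, infDist y ↑(⨅ i, U i) ≤ C * ∑ i, infDist y (U i : Set E) := by
  let T : E →ₗ[𝕜] ι → E := LinearMap.pi fun i => ((U i)ᗮ.starProjection : E →ₗ[𝕜] E)
  have hker : LinearMap.ker T = ⨅ i, U i := by
    simp [T, LinearMap.ker_pi]
  obtain ⟨C, hC, hT⟩ := T.exists_infDist_ker_le_mul_norm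
  refine ⟨C, hC, fun y => ?_⟩
  have hnorm : ‖T y‖ ≤ ∑ i, infDist y (U i : Set E) := by
    refine (pi_norm_le_iff_of_nonneg (Finset.sum_nonneg fun i _ => infDist_nonneg)).mpr fun i => ?_
    rw [LinearMap.pi_apply, ContinuousLinearMap.coe_coe, ← infDist_eq_norm_starProjection_orthogonal]
    exact Finset.single_le_sum (f := fun j => infDist y (U j : Set E))
      (fun j _ => infDist_nonneg) (Finset.mem_univ i)
  calc infDist y ↑(⨅ i, U i) ≤ C * ‖T y‖ := hker ▸ hT y
    _ ≤ C * ∑ i, infDist y (U i : Set E) := by gcongr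

end InnerProductSpace

/-- For affine subspaces `A₁, …, A_N` of `ℝⁿ` (translates of linear subspaces) with
nonempty intersection, there is `c > 0` such that
`dist(x, ⋂_k A_k) ≤ c Σ_k dist(x, A_k)` for all `x`. -/
theorem dist_iInter_affine_le_sum_dists
    (n N : ℕ) (A : Fin N → Set (EuclideanSpace ℝ (Fin n)))
    (hA : ∀ k, ∃ (x₀ : EuclideanSpace ℝ (Fin n))
        (U : Submodule ℝ (EuclideanSpace ℝ (Fin n))),
        A k = (fun v => x₀ + v) '' (U : Set (EuclideanSpace ℝ (Fin n))))
    (hint : (⋂ k, A k).Nonempty) :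
    ∃ c > (0:ℝ), ∀ x : EuclideanSpace ℝ (Fin n),
      infDist x (⋂ k, A k) ≤ c * ∑ k, infDist x (A k) := by
  obtain ⟨p, hp⟩ := hint
  choose x₀ U hU using hA
  have hA_eq : ∀ k, A k = p +ᵥ (U k : Set (EuclideanSpace ℝ (Fin n))) := fun k => by
    have hpk : p ∈ A k := mem_iInter.mp hp k
    rw [hU k] at hpk ⊢
    exact (leftAddCoset_eq_iff (U k).toAddSubgroup).mpr ((mem_leftAddCoset_iff (x₀ k)).mp hpk)
  have hInter_eq :
      ⋂ k, A k = p +ᵥ ((⨅ k, U k : Submodule ℝ _) : Set (EuclideanSpace ℝ (Fin n))) := by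
    simp_rw [hA_eq, Submodule.coe_iInf, vadd_set_iInter]
  obtain ⟨c, hc, hcU⟩ := Submodule.exists_infDist_iInf_le_mul_sum U
  refine ⟨c, hc, fun x => ?_⟩
  rw [hInter_eq]
  simpa only [hA_eq, infDist_vadd_set] using hcU (-p +ᵥ x)
end
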